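/- arXiv:2310.05549 — 3 statements merged into one kernel-verified Lean document; each statement's English description precedes it below -/
import Mathlib

section
/- Let (Ω, 𝓕, ℙ) be a probability space, X : Ω → 𝓧 a measurable map into a measurable space, W : Ω → ℝ a random variable taking values in {0,1}, and Y₀, Y₁ : Ω → ℝ integrable random variables. Let e(X) be a version of the conditional expectation E[W | σ(X)] and suppose there exists ε > 0 with ε ≤ e(X) ≤ 1 − ε almost surely. Assume unconfoundedness: the pair (Y₀, Y₁) is conditionally independent of W given σ(X). Define the observed outcome Y^obs = W·Y₁ + (1−W)·Y₀, and for a constant C ∈ ℝ define the transformed outcome Ẑ* = (Y^obs − C)·(W − e(X)) / (e(X)·(1 − e(X))). Then, almost surely, E[Ẑ* | σ(X)] = E[Y₁ | σ(X)] − E[Y₀ | σ(X)]. -/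
/-!
Since `W ∈ {0, 1}`, the transformed outcome splits into two inverse-propensity-weighted terms,
`Ẑ* = W (Y₁ - C) / e - (1 - W) (Y₀ - C) / (1 - e)`. Conditional independence of `W` and `Y₁ - C`
given `σ(X)` gives `E[W (Y₁ - C) | X] = e · E[Y₁ - C | X]`, and `1/e` is a bounded
`σ(X)`-measurable factor, so the first term has conditional expectation `E[Y₁ | X] - C`;
symmetrically the second has `E[Y₀ | X] - C`, and the shift `C` cancels.
The product rule for conditionally independent variables is obtained from the regular
conditional probability `condExpKernel`, under which they are almost surely independent.
-/

open MeasureTheory ProbabilityTheory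

theorem norm_inv_le_inv_of_le {x ε : ℝ} (hε : 0 < ε) (h : ε ≤ x) : ‖x⁻¹‖ ≤ ε⁻¹ := by
  rw [norm_inv, Real.norm_of_nonneg (hε.le.trans h)]
  exact inv_anti₀ hε h

theorem transformed_outcome_eq_ipw_sub {w y₀ y₁ c e : ℝ} (hw : w = 0 ∨ w = 1) (he : e ≠ 0)
    (he' : 1 - e ≠ 0) :
    ((w * y₁ + (1 - w) * y₀) - c) * (w - e) / (e * (1 - e))
      = w * (y₁ - c) / e - (1 - w) * (y₀ - c) / (1 - e) := by
  rcases hw with rfl | rfl <;> field_simp <;> ring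

namespace MeasureTheory

variable {Ω : Type*} {m : MeasurableSpace Ω} [mΩ : MeasurableSpace Ω] {μ : Measure Ω}

theorem Integrable.div_of_ae_const_le {f g : Ω → ℝ} {ε : ℝ} (hf : Integrable f μ)
    (hg : AEStronglyMeasurable g μ) (hε : 0 < ε) (hbound : ∀ᵐ ω ∂μ, ε ≤ g ω) :
    Integrable (fun ω => f ω / g ω) μ := by
  simp_rw [div_eq_mul_inv]
  exact hf.mul_bdd hg.aemeasurable.inv.aestronglyMeasurable
    (hbound.mono fun _ h => norm_inv_le_inv_of_le hε h)

variable [IsFiniteMeasure μ]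

theorem condExp_sub_const (hm : m ≤ mΩ) {f : Ω → ℝ} (hf : Integrable f μ) (c : ℝ) :
    μ[fun ω => f ω - c | m] =ᵐ[μ] fun ω => μ[f | m] ω - c := by
  filter_upwards [condExp_sub hf (integrable_const c) m] with ω hω
  rw [condExp_const hm] at hω
  exact hω

theorem condExp_const_sub (hm : m ≤ mΩ) {f : Ω → ℝ} (hf : Integrable f μ) (c : ℝ) :
    μ[fun ω => c - f ω | m] =ᵐ[μ] fun ω => c - μ[f | m] ω := by
  filter_upwards [condExp_sub (integrable_const c) hf m] with ω hω
  rw [condExp_const hm] at hω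
  exact hω

end MeasureTheory

namespace ProbabilityTheory

variable {Ω : Type*} {m : MeasurableSpace Ω} [mΩ : MeasurableSpace Ω] [StandardBorelSpace Ω]
  {μ : Measure Ω} [IsFiniteMeasure μ] {hm : m ≤ mΩ}

theorem CondIndepFun.ae_indepFun_condExpKernel {β β' : Type*} {mβ : MeasurableSpace β}
    {mβ' : MeasurableSpace β'} [MeasurableSpace.CountableOrCountablyGenerated Ω (β × β')]
    {f : Ω → β} {g : Ω → β'} (hf : Measurable f) (hg : Measurable g)
    (h : CondIndepFun m hm f g μ) :
    ∀ᵐ ω ∂μ, IndepFun f g (condExpKernel μ m ω) := by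
  have hmap := (condIndepFun_iff_map_prod_eq_prod_map_map hf hg).1 h
  filter_upwards [ae_of_ae_trim hm hmap] with ω hω
  rw [indepFun_iff_map_prod_eq_prod_map_map hf.aemeasurable hg.aemeasurable]
  simpa [Kernel.map_apply _ (hf.prodMk hg), Kernel.map_apply _ hf, Kernel.map_apply _ hg,
    Kernel.prod_apply] using hω

theorem CondIndepFun.congr_ae {β β' : Type*} {mβ : MeasurableSpace β}
    {mβ' : MeasurableSpace β'} {f f' : Ω → β} {g g' : Ω → β'} (h : CondIndepFun m hm f g μ)
    (hf : f =ᵐ[μ] f') (hg : g =ᵐ[μ] g') : CondIndepFun m hm f' g' μ := by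
  rw [← condExpKernel_comp_trim (μ := μ) hm] at hf hg
  exact Kernel.IndepFun.congr' h (Measure.ae_ae_of_ae_comp hf) (Measure.ae_ae_of_ae_comp hg)

theorem condExp_mul_ae_eq_of_condIndepFun_of_measurable {X Y : Ω → ℝ}
    (hXm : Measurable X) (hYm : Measurable Y) (hX : Integrable X μ) (hY : Integrable Y μ)
    (hXY : Integrable (X * Y) μ) (h : CondIndepFun m hm X Y μ) :
    μ[X * Y | m] =ᵐ[μ] μ[X | m] * μ[Y | m] := by
  filter_upwards [condExp_ae_eq_integral_condExpKernel hm hXY,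
    condExp_ae_eq_integral_condExpKernel hm hX, condExp_ae_eq_integral_condExpKernel hm hY,
    h.ae_indepFun_condExpKernel hXm hYm] with ω hXYω hXω hYω hindep
  rw [Pi.mul_apply, hXYω, hXω, hYω]
  exact hindep.integral_mul_eq_mul_integral hXm.aestronglyMeasurable hYm.aestronglyMeasurable

theorem condExp_mul_ae_eq_of_condIndepFun {X Y : Ω → ℝ}
    (hX : Integrable X μ) (hY : Integrable Y μ) (hXY : Integrable (X * Y) μ)
    (h : CondIndepFun m hm X Y μ) :
    μ[X * Y | m] =ᵐ[μ] μ[X | m] * μ[Y | m] := by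
  have hXX' := hX.1.ae_eq_mk
  have hYY' := hY.1.ae_eq_mk
  have hXY' : X * Y =ᵐ[μ] hX.1.mk X * hY.1.mk Y := hXX'.mul hYY'
  calc μ[X * Y | m]
      =ᵐ[μ] μ[hX.1.mk X * hY.1.mk Y | m] := condExp_congr_ae hXY'
    _ =ᵐ[μ] μ[hX.1.mk X | m] * μ[hY.1.mk Y | m] :=
        condExp_mul_ae_eq_of_condIndepFun_of_measurable hX.1.stronglyMeasurable_mk.measurable
          hY.1.stronglyMeasurable_mk.measurable (hX.congr hXX') (hY.congr hYY')
          (hXY.congr hXY') (h.congr_ae hXX' hYY')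
    _ =ᵐ[μ] μ[X | m] * μ[Y | m] :=
        (condExp_congr_ae hXX'.symm).mul (condExp_congr_ae hYY'.symm)

theorem condExp_mul_div_ae_eq_of_condIndepFun {D Y e : Ω → ℝ} {ε : ℝ}
    (hD : Integrable D μ) (hY : Integrable Y μ) (hDY : Integrable (D * Y) μ)
    (h : CondIndepFun m hm D Y μ) (he : e =ᵐ[μ] μ[D | m]) (hε : 0 < ε)
    (hbound : ∀ᵐ ω ∂μ, ε ≤ e ω) :
    μ[fun ω => D ω * Y ω / e ω | m] =ᵐ[μ] μ[Y | m] := by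
  have he_inv : AEStronglyMeasurable[m] (fun ω => (e ω)⁻¹) μ :=
    ⟨fun ω => (μ[D | m] ω)⁻¹, stronglyMeasurable_condExp.measurable.inv.stronglyMeasurable,
      he.fun_comp Inv.inv⟩
  calc μ[fun ω => D ω * Y ω / e ω | m]
      = μ[(fun ω => (e ω)⁻¹) * (D * Y) | m] := by
        congr 1; ext ω; simp only [Pi.mul_apply]; ring
    _ =ᵐ[μ] (fun ω => (e ω)⁻¹) * μ[D * Y | m] :=
        condExp_stronglyMeasurable_mul_of_bound₀ hm he_inv hDY ε⁻¹
          (hbound.mono fun _ h => norm_inv_le_inv_of_le hε h)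
    _ =ᵐ[μ] (fun ω => (e ω)⁻¹) * (μ[D | m] * μ[Y | m]) :=
        Filter.EventuallyEq.rfl.mul (condExp_mul_ae_eq_of_condIndepFun hD hY hDY h)
    _ =ᵐ[μ] μ[Y | m] := by
        filter_upwards [he, hbound] with ω heω hεω
        have : e ω ≠ 0 := (hε.trans_le hεω).ne'
        simp only [Pi.mul_apply, ← heω]
        field_simp

theorem integrable_mul_div_and_condExp_ae_eq_of_bdd {D Y e : Ω → ℝ} {c ε : ℝ}
    (hD : AEStronglyMeasurable D μ) (hD_le : ∀ᵐ ω ∂μ, ‖D ω‖ ≤ c) (hY : Integrable Y μ)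
    (h : CondIndepFun m hm D Y μ) (he : e =ᵐ[μ] μ[D | m]) (hε : 0 < ε)
    (hbound : ∀ᵐ ω ∂μ, ε ≤ e ω) :
    Integrable (fun ω => D ω * Y ω / e ω) μ ∧
      μ[fun ω => D ω * Y ω / e ω | m] =ᵐ[μ] μ[Y | m] := by
  have hDY : Integrable (D * Y) μ := hY.bdd_mul hD hD_le
  refine ⟨hDY.div_of_ae_const_le (integrable_condExp.1.congr he.symm) hε hbound, ?_⟩
  exact condExp_mul_div_ae_eq_of_condIndepFun ((integrable_const c).mono' hD hD_le) hY hDY h he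
    hε hbound

end ProbabilityTheory

/-- Conditional unbiasedness of the constant-shifted transformed outcome
`Ẑ* = (Y^obs − C)·(W − e(X)) / (e(X)·(1 − e(X)))` for the CATE. -/
theorem transformed_outcome_shifted_condExp
    {Ω 𝓧 : Type*} [MeasureSpace Ω] [IsProbabilityMeasure (ℙ : Measure Ω)]
    [StandardBorelSpace Ω]
    [m𝓧 : MeasurableSpace 𝓧]
    (X : Ω → 𝓧) (hX : Measurable X)
    (W Y₀ Y₁ : Ω → ℝ)
    (hW : Measurable W) (hWbin : ∀ ω, W ω = 0 ∨ W ω = 1)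
    (hY₀ : Integrable Y₀ ℙ) (hY₁ : Integrable Y₁ ℙ)
    (e : Ω → ℝ) (he : e =ᵐ[ℙ] ℙ[W | m𝓧.comap X])
    (ε : ℝ) (hε : 0 < ε)
    (hbound : ∀ᵐ ω ∂ℙ, ε ≤ e ω ∧ e ω ≤ 1 - ε)
    (hunconf : CondIndepFun (m𝓧.comap X) hX.comap_le (fun ω => (Y₀ ω, Y₁ ω)) W ℙ)
    (C : ℝ) :
    ℙ[(fun ω => ((W ω * Y₁ ω + (1 - W ω) * Y₀ ω) - C) * (W ω - e ω) /
        (e ω * (1 - e ω))) | m𝓧.comap X]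
      =ᵐ[ℙ] fun ω => (ℙ[Y₁ | m𝓧.comap X]) ω - (ℙ[Y₀ | m𝓧.comap X]) ω := by
  have hm : m𝓧.comap X ≤ _ := hX.comap_le
  have hW_le : ∀ᵐ ω ∂ℙ, ‖W ω‖ ≤ 1 := .of_forall fun ω => by rcases hWbin ω with h | h <;> simp [h]
  have hW'_le : ∀ᵐ ω ∂ℙ, ‖1 - W ω‖ ≤ 1 :=
    .of_forall fun ω => by rcases hWbin ω with h | h <;> simp [h]
  have he' : (fun ω => 1 - e ω) =ᵐ[ℙ] ℙ[fun ω => 1 - W ω | m𝓧.comap X] := by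
    have hWint : Integrable W ℙ := (integrable_const 1).mono' hW.aestronglyMeasurable hW_le
    filter_upwards [he, condExp_const_sub hm hWint 1] with ω heω hcondω
    rw [hcondω, heω]
  obtain ⟨hint₁, hT₁⟩ := integrable_mul_div_and_condExp_ae_eq_of_bdd hW.aestronglyMeasurable
    hW_le (hY₁.sub (integrable_const C))
    (hunconf.comp (measurable_snd.sub_const C) measurable_id).symm he hε
    (hbound.mono fun _ h => h.1)
  obtain ⟨hint₀, hT₀⟩ := integrable_mul_div_and_condExp_ae_eq_of_bdd (by fun_prop)
    hW'_le (hY₀.sub (integrable_const C))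
    (hunconf.comp (measurable_fst.sub_const C) (measurable_const.sub measurable_id)).symm he' hε
    (hbound.mono fun _ h => by linarith [h.2])
  calc _ =ᵐ[ℙ] ℙ[fun ω => W ω * (Y₁ ω - C) / e ω - (1 - W ω) * (Y₀ ω - C) / (1 - e ω)
          | m𝓧.comap X] := by
        refine condExp_congr_ae ?_
        filter_upwards [hbound] with ω hω
        exact transformed_outcome_eq_ipw_sub (hWbin ω) (by linarith) (by linarith)
    _ =ᵐ[ℙ] _ := condExp_sub hint₁ hint₀ _
    _ =ᵐ[ℙ] _ := hT₁.sub hT₀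
    _ =ᵐ[ℙ] _ := (condExp_sub_const hm hY₁ C).sub (condExp_sub_const hm hY₀ C)
    _ = _ := by ext ω; simp only [Pi.sub_apply]; ring
end

section
/- Let (Ω, 𝓕, ℙ) be a probability space, X : Ω → 𝓧 a measurable map into a measurable space, W : Ω → ℝ a random variable taking values in {0,1}, and Y₁ : Ω → ℝ an integrable random variable. Let e(X) be a version of the conditional expectation E[W | σ(X)] and suppose there exists ε > 0 with ε ≤ e(X) ≤ 1 − ε almost surely. Assume Y₁ is conditionally independent of W given σ(X). Then, almost surely, E[Y₁·W / e(X) | σ(X)] = E[Y₁ | σ(X)]. -/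
/-!
Conditional independence of `Y₁` and `W` given `σ(X)` factorises the conditional expectation of
the product, `E[Y₁ W | σ(X)] = E[Y₁ | σ(X)] e(X)`: for almost every `ω`, `Y₁` and `W` are
independent under the regular conditional distribution `condExpKernel ℙ σ(X) ω`, whose integrals
compute the conditional expectations. Since `e(X)` is `σ(X)`-measurable and bounded
below by `ε`, the factor `1 / e(X)` pulls out of the conditional expectation and cancels `e(X)`.
-/

open MeasureTheory ProbabilityTheory

namespace ProbabilityTheory

variable {Ω : Type*} {m' mΩ : MeasurableSpace Ω}

theorem CondIndepFun.congr [StandardBorelSpace Ω] {hm' : m' ≤ mΩ} {μ : Measure Ω}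
    [IsFiniteMeasure μ] {β γ : Type*} [MeasurableSpace β] [MeasurableSpace γ]
    {f f' : Ω → β} {g g' : Ω → γ} (h : CondIndepFun m' hm' f g μ)
    (hf : f =ᵐ[μ] f') (hg : g =ᵐ[μ] g') : CondIndepFun m' hm' f' g' μ := by
  rw [← condExpKernel_comp_trim (μ := μ) hm'] at hf hg
  exact Kernel.IndepFun.congr' h (Measure.ae_ae_of_ae_comp hf) (Measure.ae_ae_of_ae_comp hg)

/-- The rational half-lines form a countable generating π-system of `ℝ`, so the countably many
product identities on them, each valid off a null set, hold simultaneously off one null set. -/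
theorem Kernel.IndepFun.ae_indepFun {α : Type*} {mα : MeasurableSpace α} {κ : Kernel α Ω}
    [IsMarkovKernel κ] {μ : Measure α} {f g : Ω → ℝ} (hf : Measurable f) (hg : Measurable g)
    (h : Kernel.IndepFun f g κ μ) : ∀ᵐ a ∂μ, ProbabilityTheory.IndepFun f g (κ a) := by
  set p : Set (Set ℝ) := ⋃ q : ℚ, {Set.Iio (q : ℝ)}
  have hp : IsPiSystem p := Real.isPiSystem_Iio_rat
  have hgen : Real.measurableSpace = .generateFrom p := by
    rw [BorelSpace.measurable_eq (α := ℝ), Real.borel_eq_generateFrom_Iio_rat]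
  have hall : ∀ᵐ a ∂μ, ∀ q r : ℚ,
      κ a (f ⁻¹' Set.Iio (q : ℝ) ∩ g ⁻¹' Set.Iio (r : ℝ)) =
        κ a (f ⁻¹' Set.Iio (q : ℝ)) * κ a (g ⁻¹' Set.Iio (r : ℝ)) := by
    simp only [ae_all_iff]
    exact fun q r ↦ h.meas_inter ⟨_, measurableSet_Iio, rfl⟩ ⟨_, measurableSet_Iio, rfl⟩
  filter_upwards [hall] with a ha
  refine IndepSets.indep hf.comap_le hg.comap_le (hp.comap f) (hp.comap g)
    (by rw [hgen, MeasurableSpace.comap_generateFrom]; rfl)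
    (by rw [hgen, MeasurableSpace.comap_generateFrom]; rfl) ?_
  rintro _ _ ⟨_, hs, rfl⟩ ⟨_, ht, rfl⟩
  simp only [p, Set.mem_iUnion, Set.mem_singleton_iff] at hs ht
  obtain ⟨q, rfl⟩ := hs
  obtain ⟨r, rfl⟩ := ht
  exact Filter.Eventually.of_forall fun _ ↦ ha q r

theorem CondIndepFun.condExp_mul_ae_eq [StandardBorelSpace Ω] {hm' : m' ≤ mΩ} {μ : Measure Ω}
    [IsFiniteMeasure μ] {f g : Ω → ℝ} (h : CondIndepFun m' hm' f g μ)
    (hf : Integrable f μ) (hg : Integrable g μ) (hfg : Integrable (f * g) μ) :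
    μ[f * g | m'] =ᵐ[μ] μ[f | m'] * μ[g | m'] := by
  set f' := hf.1.mk f
  set g' := hg.1.mk g
  have hff' : f =ᵐ[μ] f' := hf.1.ae_eq_mk
  have hgg' : g =ᵐ[μ] g' := hg.1.ae_eq_mk
  have hindep : ∀ᵐ ω ∂μ, IndepFun f' g' (condExpKernel μ m' ω) :=
    ae_of_ae_trim hm' <| Kernel.IndepFun.ae_indepFun hf.1.stronglyMeasurable_mk.measurable
      hg.1.stronglyMeasurable_mk.measurable (h.congr hff' hgg')
  calc μ[f * g | m']
      =ᵐ[μ] fun ω ↦ ∫ x, (f' * g') x ∂condExpKernel μ m' ω :=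
        (condExp_congr_ae (hff'.mul hgg')).trans
          (condExp_ae_eq_integral_condExpKernel hm' (hfg.congr (hff'.mul hgg')))
    _ =ᵐ[μ] fun ω ↦
        (∫ x, f' x ∂condExpKernel μ m' ω) * ∫ x, g' x ∂condExpKernel μ m' ω := by
        filter_upwards [hindep] with ω hω
        exact hω.integral_mul_eq_mul_integral hf.1.stronglyMeasurable_mk.aestronglyMeasurable
          hg.1.stronglyMeasurable_mk.aestronglyMeasurable
    _ =ᵐ[μ] μ[f | m'] * μ[g | m'] :=
        ((condExp_congr_ae hff').trans (condExp_ae_eq_integral_condExpKernel hm'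
          (hf.congr hff'))).symm.mul
        ((condExp_congr_ae hgg').trans (condExp_ae_eq_integral_condExpKernel hm'
          (hg.congr hgg'))).symm

end ProbabilityTheory

theorem MeasureTheory.condExp_inv_mul_of_stronglyMeasurable {Ω : Type*}
    {m mΩ : MeasurableSpace Ω} {μ : Measure Ω} {e g : Ω → ℝ} {ε : ℝ} (hm : m ≤ mΩ)
    (he : StronglyMeasurable[m] e)
    (hε : 0 < ε) (he_ge : ∀ᵐ ω ∂μ, ε ≤ e ω) (hg : Integrable g μ) :
    μ[e⁻¹ * g | m] =ᵐ[μ] e⁻¹ * μ[g | m] := by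
  have he_inv : StronglyMeasurable[m] e⁻¹ := he.measurable.inv.stronglyMeasurable
  have he_inv_le : ∀ᵐ ω ∂μ, ‖e⁻¹ ω‖ ≤ ε⁻¹ := by
    filter_upwards [he_ge] with ω hω
    rw [Pi.inv_apply, Real.norm_eq_abs, abs_inv, abs_of_pos (hε.trans_le hω)]
    exact inv_anti₀ hε hω
  exact condExp_mul_of_stronglyMeasurable_left he_inv
    (hg.bdd_mul (he_inv.mono hm).aestronglyMeasurable he_inv_le) hg

/-- Inverse-propensity-weighting identity for the treated potential outcome:
`E[Y₁·W / e(X) | σ(X)] = E[Y₁ | σ(X)]` a.s. -/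
theorem ipw_treated_condExp
    {Ω 𝓧 : Type*} [MeasureSpace Ω] [IsProbabilityMeasure (ℙ : Measure Ω)]
    [StandardBorelSpace Ω]
    [m𝓧 : MeasurableSpace 𝓧]
    (X : Ω → 𝓧) (hX : Measurable X)
    (W Y₁ : Ω → ℝ)
    (hW : Measurable W) (hWbin : ∀ ω, W ω = 0 ∨ W ω = 1)
    (hY₁ : Integrable Y₁ ℙ)
    (e : Ω → ℝ) (he : e =ᵐ[ℙ] ℙ[W | m𝓧.comap X])
    (ε : ℝ) (hε : 0 < ε)
    (hbound : ∀ᵐ ω ∂ℙ, ε ≤ e ω ∧ e ω ≤ 1 - ε)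
    (hindep : CondIndepFun (m𝓧.comap X) hX.comap_le Y₁ W ℙ) :
    ℙ[(fun ω => Y₁ ω * W ω / e ω) | m𝓧.comap X] =ᵐ[ℙ] ℙ[Y₁ | m𝓧.comap X] := by
  set e' := ℙ[W | m𝓧.comap X]
  have hW_le : ∀ᵐ ω ∂ℙ, ‖W ω‖ ≤ 1 :=
    .of_forall fun ω ↦ by rcases hWbin ω with h | h <;> simp [h]
  have hYW : Integrable (Y₁ * W) ℙ := hY₁.mul_bdd hW.aestronglyMeasurable hW_le
  have he'_ge : ∀ᵐ ω ∂ℙ, ε ≤ e' ω := by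
    filter_upwards [hbound, he] with ω hω hωe
    exact hωe ▸ hω.1
  calc ℙ[(fun ω => Y₁ ω * W ω / e ω) | m𝓧.comap X]
      =ᵐ[ℙ] ℙ[e'⁻¹ * (Y₁ * W) | m𝓧.comap X] := by
        refine condExp_congr_ae ?_
        filter_upwards [he] with ω hω
        simp [hω, div_eq_inv_mul]
    _ =ᵐ[ℙ] e'⁻¹ * ℙ[Y₁ * W | m𝓧.comap X] :=
        condExp_inv_mul_of_stronglyMeasurable hX.comap_le stronglyMeasurable_condExp hε he'_ge hYW
    _ =ᵐ[ℙ] e'⁻¹ * (ℙ[Y₁ | m𝓧.comap X] * e') :=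
        (hindep.condExp_mul_ae_eq hY₁ (.of_bound hW.aestronglyMeasurable 1 hW_le) hYW).mul_left
    _ =ᵐ[ℙ] ℙ[Y₁ | m𝓧.comap X] := by
        filter_upwards [he'_ge] with ω hω
        have he'_ne : e' ω ≠ 0 := (hε.trans_le hω).ne'
        simp only [Pi.mul_apply, Pi.inv_apply]
        field_simp
end

section
/- Let (Ω, 𝓕, ℙ) be a probability space, X : Ω → 𝓧 a measurable map into a measurable space, W : Ω → ℝ a random variable taking values in {0,1}, and Y₀, Y₁ : Ω → ℝ random variables taking values in {0,1}. Assume W is independent of the triple (X, Y₀, Y₁) and ℙ(W = 1) = 1/2. Define Y^obs = W·Y₁ + (1−W)·Y₀ and the class-variable transformation Z = W·Y^obs + (1−W)·(1−Y^obs) (so Z = 1 exactly when W = 1, Y^obs = 1 or W = 0, Y^obs = 0, and Z = 0 otherwise). Then, almost surely, 2·E[Z | σ(X)] − 1 = E[Y₁ | σ(X)] − E[Y₀ | σ(X)]. -/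
/-!
For `W ∈ {0, 1}` the class variable is `Z = W·Y₁ + (1 − W)·(1 − Y₀)`. Conditioning first on
`σ(X, Y₀, Y₁)`, which contains `σ(X)` and is independent of `W`, each term factors:
`E[W·Y₁ | X] = E[W]·E[Y₁ | X] = ½·E[Y₁ | X]` and `E[(1 − W)(1 − Y₀) | X] = ½·(1 − E[Y₀ | X])`.
Summing gives `2·E[Z | X] − 1 = E[Y₁ | X] − E[Y₀ | X]`.
-/

open MeasureTheory ProbabilityTheory

section ZeroOneValued

variable {R : Type*} [Ring R] {a b : R}

theorem mul_eq_zero_or_eq_one (ha : a = 0 ∨ a = 1) (hb : b = 0 ∨ b = 1) :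
    a * b = 0 ∨ a * b = 1 := by
  rcases ha with rfl | rfl <;> simp [hb]

theorem one_sub_eq_zero_or_eq_one (ha : a = 0 ∨ a = 1) : 1 - a = 0 ∨ 1 - a = 1 := by
  rcases ha with rfl | rfl <;> simp

theorem class_variable_eq {w : R} (y₀ y₁ : R) (hw : w = 0 ∨ w = 1) :
    w * (w * y₁ + (1 - w) * y₀) + (1 - w) * (1 - (w * y₁ + (1 - w) * y₀))
      = w * y₁ + (1 - w) * (1 - y₀) := by
  rcases hw with rfl | rfl <;> simp

variable {Ω : Type*} [MeasurableSpace Ω] {μ : Measure Ω} {f : Ω → ℝ}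

theorem integrable_of_eq_zero_or_eq_one [IsFiniteMeasure μ] (hf : Measurable f)
    (h01 : ∀ ω, f ω = 0 ∨ f ω = 1) : Integrable f μ :=
  .of_bound hf.aestronglyMeasurable 1 <| .of_forall fun ω => by rcases h01 ω with h | h <;> simp [h]

theorem integral_eq_measureReal_of_eq_zero_or_eq_one (hf : Measurable f)
    (h01 : ∀ ω, f ω = 0 ∨ f ω = 1) : μ[f] = μ.real {ω | f ω = 1} := by
  have hf_ind : f = {ω | f ω = 1}.indicator 1 := by
    ext ω
    rcases h01 ω with h | h <;> simp [h]
  conv_lhs => rw [hf_ind]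
  exact integral_indicator_one (hf (measurableSet_singleton 1))

end ZeroOneValued

section CondExp

variable {Ω : Type*} {m mΩ : MeasurableSpace Ω} {μ : Measure[mΩ] Ω}

theorem integral_one_sub [IsProbabilityMeasure μ] {f : Ω → ℝ} (hf : Integrable f μ) :
    μ[1 - f] = 1 - μ[f] := by
  rw [integral_sub' (f := 1) (integrable_const 1) hf, Pi.one_def, integral_const, probReal_univ,
    one_smul]

theorem condExp_one_sub [IsFiniteMeasure μ] (hm : m ≤ mΩ) {f : Ω → ℝ} (hf : Integrable f μ) :
    μ[1 - f | m] =ᵐ[μ] 1 - μ[f | m] := by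
  have h := condExp_sub (integrable_const (1 : ℝ)) hf m
  rwa [condExp_const hm] at h

theorem condExp_mul_of_indepFun [IsFiniteMeasure μ] {β : Type*} {mβ : MeasurableSpace β} {V U : Ω → ℝ} {T : Ω → β}
    (hT : Measurable T) (hm : m ≤ mβ.comap T) (hU : Measurable[mβ.comap T] U)
    (hVm : Measurable V) (hindep : IndepFun V T μ) (hV : Integrable V μ)
    (hVU : Integrable (V * U) μ) :
    μ[V * U | m] =ᵐ[μ] fun ω => μ[V] * μ[U | m] ω := by
  have hV_const : μ[V | mβ.comap T] =ᵐ[μ] fun _ => μ[V] :=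
    condExp_indep_eq hVm.comap_le hT.comap_le (comap_measurable V).stronglyMeasurable
      ((IndepFun_iff_Indep V T μ).mp hindep)
  have hpull : μ[U * V | mβ.comap T] =ᵐ[μ] U * μ[V | mβ.comap T] :=
    condExp_mul_of_stronglyMeasurable_left hU.stronglyMeasurable (mul_comm V U ▸ hVU) hV
  calc μ[V * U | m]
      =ᵐ[μ] μ[μ[U * V | mβ.comap T] | m] := by
        rw [mul_comm V U]
        exact (condExp_condExp_of_le hm hT.comap_le).symm
    _ =ᵐ[μ] μ[μ[V] • U | m] := condExp_congr_ae <| hpull.trans <| by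
        filter_upwards [hV_const] with ω hω
        simp [hω, mul_comm]
    _ =ᵐ[μ] fun ω => μ[V] * μ[U | m] ω := condExp_smul _ _ _

end CondExp

/-- Class-variable transformation of Jaskowski–Jaroszewicz: in a randomized
experiment with `ℙ(W = 1) = 1/2`, with `Z = W·Y^obs + (1−W)·(1−Y^obs)`, one has
`2·E[Z | σ(X)] − 1 = E[Y₁ | σ(X)] − E[Y₀ | σ(X)]` a.s. -/
theorem class_variable_transformation
    {Ω 𝓧 : Type*} [MeasureSpace Ω] [IsProbabilityMeasure (ℙ : Measure Ω)]
    [m𝓧 : MeasurableSpace 𝓧]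
    (X : Ω → 𝓧) (hX : Measurable X)
    (W Y₀ Y₁ : Ω → ℝ)
    (hW : Measurable W) (hWbin : ∀ ω, W ω = 0 ∨ W ω = 1)
    (hY₀ : Measurable Y₀) (hY₀bin : ∀ ω, Y₀ ω = 0 ∨ Y₀ ω = 1)
    (hY₁ : Measurable Y₁) (hY₁bin : ∀ ω, Y₁ ω = 0 ∨ Y₁ ω = 1)
    (hindep : IndepFun W (fun ω => (X ω, Y₀ ω, Y₁ ω)) ℙ)
    (hp : ℙ {ω | W ω = 1} = 1/2) :
    (fun ω =>
        2 * (ℙ[(fun ω' =>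
          W ω' * (W ω' * Y₁ ω' + (1 - W ω') * Y₀ ω') +
            (1 - W ω') * (1 - (W ω' * Y₁ ω' + (1 - W ω') * Y₀ ω'))) | m𝓧.comap X]) ω - 1)
      =ᵐ[ℙ] fun ω => (ℙ[Y₁ | m𝓧.comap X]) ω - (ℙ[Y₀ | m𝓧.comap X]) ω := by
  set T : Ω → 𝓧 × ℝ × ℝ := fun ω => (X ω, Y₀ ω, Y₁ ω)
  have hT : Measurable T := hX.prodMk (hY₀.prodMk hY₁)
  have hXT : m𝓧.comap X ≤ MeasurableSpace.comap T inferInstance :=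
    (measurable_fst.comp (comap_measurable T)).comap_le
  have hY₀T : Measurable[MeasurableSpace.comap T inferInstance] Y₀ :=
    measurable_fst.comp (measurable_snd.comp (comap_measurable T))
  have hY₁T : Measurable[MeasurableSpace.comap T inferInstance] Y₁ :=
    measurable_snd.comp (measurable_snd.comp (comap_measurable T))
  have hW' : ∀ ω, (1 - W) ω = 0 ∨ (1 - W) ω = 1 := fun ω => one_sub_eq_zero_or_eq_one (hWbin ω)
  have hint₁ : Integrable (W * Y₁) ℙ := integrable_of_eq_zero_or_eq_one (hW.mul hY₁)
    fun ω => mul_eq_zero_or_eq_one (hWbin ω) (hY₁bin ω)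
  have hint₀ : Integrable ((1 - W) * (1 - Y₀)) ℙ :=
    integrable_of_eq_zero_or_eq_one ((measurable_const.sub hW).mul (measurable_const.sub hY₀))
      fun ω => mul_eq_zero_or_eq_one (hW' ω) (one_sub_eq_zero_or_eq_one (hY₀bin ω))
  have hWint : Integrable W ℙ := integrable_of_eq_zero_or_eq_one hW hWbin
  have h₁ := condExp_mul_of_indepFun hT hXT hY₁T hW hindep hWint hint₁
  have h₀ := condExp_mul_of_indepFun (V := 1 - W) (U := 1 - Y₀) hT hXT
    (measurable_const.sub hY₀T)
    (measurable_const.sub hW) (hindep.comp (measurable_const.sub measurable_id) measurable_id)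
    (integrable_of_eq_zero_or_eq_one (measurable_const.sub hW) hW') hint₀
  have hEW : ℙ[W] = 1 / 2 := by
    rw [integral_eq_measureReal_of_eq_zero_or_eq_one hW hWbin, measureReal_def, hp]; norm_num
  rw [show (fun ω' => _) = W * Y₁ + (1 - W) * (1 - Y₀) from
    funext fun ω => class_variable_eq (Y₀ ω) (Y₁ ω) (hWbin ω)]
  filter_upwards [condExp_add hint₁ hint₀ (m𝓧.comap X), h₁, h₀,
    condExp_one_sub hX.comap_le (integrable_of_eq_zero_or_eq_one hY₀ hY₀bin)]
    with ω hZ h₁ω h₀ω hY₀ω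
  rw [hZ, Pi.add_apply, h₁ω, h₀ω, hY₀ω, integral_one_sub hWint, hEW, Pi.sub_apply, Pi.one_apply]
  ring
end
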